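/- If G is a graph on n vertices that is not a complete graph, then its hat guessing number satisfies μ(G) < n. In particular every graph of order n satisfies μ(G) ≤ n. -/

import Mathlib

/-!
A vertex never sees its own hat, so whatever the others wear, exactly one of the `k` colours of
its own hat makes it guess right: it is right on exactly `k ^ (n - 1)` of the `k ^ n` hat
assignments. A winning strategy must cover all assignments, so `k ^ n ≤ n k ^ (n - 1)`, i.e.
`k ≤ n`. If `u ≠ w` are not adjacent, neither sees the other's hat either, so both are right on
exactly `k ^ (n - 2)` assignments; inclusion–exclusion sharpens the count to
`k ^ n ≤ n k ^ (n - 1) - k ^ (n - 2)`, which forces `k < n`.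
-/

/-- The hat guessing number of a graph. -/
noncomputable def hatGuessingNumber {V : Type*} [Fintype V] (G : SimpleGraph V) : ℕ :=
  sSup {k : ℕ | ∃ F : V → (V → Fin k) → Fin k,
    (∀ v : V, ∀ x y : V → Fin k, (∀ u : V, G.Adj v u → x u = y u) → F v x = F v y) ∧
    (∀ x : V → Fin k, ∃ v : V, F v x = x v)}

open Finset Fintype

theorem card_biUnion_add_card_inter_le_sum_card {ι β : Type*} [DecidableEq ι] [DecidableEq β]
    (s : Finset ι) (A : ι → Finset β) {u w : ι} (hu : u ∈ s) (hw : w ∈ s) (huw : u ≠ w) :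
    #(s.biUnion A) + #(A u ∩ A w) ≤ ∑ i ∈ s, #(A i) := by
  set t := (s.erase u).erase w
  have hs : s = insert u (insert w t) := by
    rw [insert_erase (mem_erase.2 ⟨huw.symm, hw⟩), insert_erase hu]
  have hwt : w ∉ t := notMem_erase w _
  have hut : u ∉ insert w t := by simp [t, huw]
  rw [hs, biUnion_insert, biUnion_insert, sum_insert hut, sum_insert hwt, ← union_assoc]
  have h₁ := card_union_le (A u ∪ A w) (t.biUnion A)
  have h₂ := card_union_add_card_inter (A u) (A w)
  have h₃ : #(t.biUnion A) ≤ ∑ i ∈ t, #(A i) := card_biUnion_le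
  omega

theorem card_filter_forall_mem_eq_mul_pow {V α : Type*} [Fintype V] [DecidableEq V] [Fintype α]
    [DecidableEq α] (T : Finset V) (g : V → (V → α) → α)
    (hg : ∀ t ∈ T, ∀ x y : V → α, (∀ u ∉ T, x u = y u) → g t x = g t y) :
    #{x : V → α | ∀ t ∈ T, g t x = x t} * card α ^ #T = card α ^ card V := by
  -- overwrite the coordinates in `T` by the values of `g`, remembering the old ones
  let e : (V → α) ≃ {x : V → α // ∀ t ∈ T, g t x = x t} × (T → α) :=
    { toFun := fun x => (⟨fun u => if u ∈ T then g u x else x u, fun t ht => by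
          simp only [ht, if_true]
          exact hg t ht _ _ fun u hu => by simp [hu]⟩, fun t => x t)
      invFun := fun p u => if h : u ∈ T then p.2 ⟨u, h⟩ else p.1.1 u
      left_inv := fun x => by funext u; by_cases hu : u ∈ T <;> simp [hu]
      right_inv := fun ⟨⟨y, hy⟩, c⟩ => by
        refine Prod.ext (Subtype.ext (funext fun u => ?_)) (funext fun t => by simp)
        by_cases hu : u ∈ T
        · simp only [hu, if_true]
          rw [← hy u hu]
          exact hg u hu _ _ fun u' hu' => by simp [hu']
        · simp [hu] }
  have := Fintype.card_congr e
  simpa [Fintype.card_prod, Fintype.card_fun, Fintype.card_subtype] using this.symm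

namespace SimpleGraph

variable {V α : Type*} {G : SimpleGraph V} {F : V → (V → α) → α}

variable (G) in
def IsHatStrategy (F : V → (V → α) → α) : Prop :=
  ∀ v x y, (∀ u, G.Adj v u → x u = y u) → F v x = F v y

def IsWinningHatStrategy (F : V → (V → α) → α) : Prop :=
  ∀ x, ∃ v, F v x = x v

theorem IsHatStrategy.eq_of_forall_notMem_eq (hF : G.IsHatStrategy F) {v : V} {T : Finset V}
    (hT : ∀ t ∈ T, ¬ G.Adj v t) {x y : V → α} (hxy : ∀ u ∉ T, x u = y u) : F v x = F v y :=
  hF v x y fun u hu => hxy u fun huT => hT u huT hu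

variable [Fintype V] [Fintype α]

section Decidable

variable [DecidableEq V] [DecidableEq α]

def correctGuesses (F : V → (V → α) → α) (v : V) : Finset (V → α) :=
  {x | F v x = x v}

theorem IsHatStrategy.card_correctGuesses_mul (hF : G.IsHatStrategy F) (v : V) :
    #(correctGuesses F v) * card α = card α ^ card V := by
  have := card_filter_forall_mem_eq_mul_pow {v} F fun t ht x y hxy => by
    rw [mem_singleton.1 ht]
    exact hF.eq_of_forall_notMem_eq (by simp) hxy
  simpa [correctGuesses] using this

theorem IsHatStrategy.card_correctGuesses_inter_mul (hF : G.IsHatStrategy F) {u w : V}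
    (huw : u ≠ w) (hadj : ¬ G.Adj u w) :
    #(correctGuesses F u ∩ correctGuesses F w) * card α ^ 2 = card α ^ card V := by
  have := card_filter_forall_mem_eq_mul_pow {u, w} F fun t ht x y hxy => by
    rcases mem_insert.1 ht with rfl | ht
    · exact hF.eq_of_forall_notMem_eq (by simp [hadj]) hxy
    · rw [mem_singleton.1 ht]
      exact hF.eq_of_forall_notMem_eq (by simp [adj_comm, hadj]) hxy
  simpa [correctGuesses, filter_and, card_pair huw] using this

theorem IsHatStrategy.sum_card_correctGuesses_mul (hF : G.IsHatStrategy F) :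
    (∑ v, #(correctGuesses F v)) * card α = card V * card α ^ card V := by
  simp [sum_mul, hF.card_correctGuesses_mul]

theorem IsWinningHatStrategy.biUnion_correctGuesses (hW : IsWinningHatStrategy F) :
    univ.biUnion (correctGuesses F) = univ :=
  eq_univ_of_forall fun x => by
    obtain ⟨v, hv⟩ := hW x
    exact mem_biUnion.2 ⟨v, mem_univ v, by simpa [correctGuesses] using hv⟩

end Decidable

theorem IsHatStrategy.card_le (hF : G.IsHatStrategy F) (hW : IsWinningHatStrategy F) :
    card α ≤ card V := by
  classical
  rcases (card α).eq_zero_or_pos with h | hpos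
  · omega
  have hcover : card α ^ card V ≤ ∑ v, #(correctGuesses F v) := by
    calc card α ^ card V = #(univ.biUnion (correctGuesses F)) := by
          rw [hW.biUnion_correctGuesses, card_univ, card_fun]
      _ ≤ _ := card_biUnion_le
  have hmul := Nat.mul_le_mul_right (card α) hcover
  rw [hF.sum_card_correctGuesses_mul, mul_comm] at hmul
  exact Nat.le_of_mul_le_mul_left (by linarith) (pow_pos hpos (card V))

theorem IsHatStrategy.card_lt (hF : G.IsHatStrategy F) (hW : IsWinningHatStrategy F) {u w : V}
    (huw : u ≠ w) (hadj : ¬ G.Adj u w) : card α < card V := by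
  classical
  rcases (card α).eq_zero_or_pos with h | hpos
  · exact h ▸ card_pos_iff.2 ⟨u⟩
  have hcover := card_biUnion_add_card_inter_le_sum_card univ (correctGuesses F)
    (mem_univ u) (mem_univ w) huw
  rw [hW.biUnion_correctGuesses, card_univ, card_fun] at hcover
  have hmul := Nat.mul_le_mul_right (card α ^ 2) hcover
  rw [add_mul, hF.card_correctGuesses_inter_mul huw hadj, pow_two,
    ← mul_assoc (∑ v, #(correctGuesses F v)), hF.sum_card_correctGuesses_mul] at hmul
  have hquad : card α * card α + 1 ≤ card V * card α :=
    Nat.le_of_mul_le_mul_left (by convert hmul using 1 <;> ring) (pow_pos hpos (card V))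
  nlinarith

end SimpleGraph

open SimpleGraph

theorem hatGuessingNumber_le_of_forall {V : Type*} [Fintype V] (G : SimpleGraph V) {m : ℕ}
    (h : ∀ k (F : V → (V → Fin k) → Fin k), G.IsHatStrategy F → IsWinningHatStrategy F → k ≤ m) :
    hatGuessingNumber G ≤ m :=
  csSup_le' fun k ⟨F, hF, hW⟩ => h k F hF hW

theorem hatGuessingNumber_le_card {V : Type*} [Fintype V] (G : SimpleGraph V) :
    hatGuessingNumber G ≤ card V :=
  hatGuessingNumber_le_of_forall G fun k F hF hW => by simpa using hF.card_le hW

theorem hatGuessingNumber_lt_card {V : Type*} [Fintype V] {G : SimpleGraph V} (hG : G ≠ ⊤) :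
    hatGuessingNumber G < card V := by
  obtain ⟨u, w, huw, hadj⟩ := ne_top_iff_exists_not_adj.1 hG
  have hle : hatGuessingNumber G ≤ card V - 1 :=
    hatGuessingNumber_le_of_forall G fun k F hF hW => by
      have hk := hF.card_lt hW huw hadj
      simp only [Fintype.card_fin] at hk
      omega
  have hV : 0 < card V := card_pos_iff.2 ⟨u⟩
  omega

/-- If `G` is a graph on `n` vertices that is not complete, then
`μ(G) < n`.  In particular every graph of order `n` satisfies `μ(G) ≤ n`. -/
theorem hat_guessing_lt_card (n : ℕ) (G : SimpleGraph (Fin n)) :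
    (G ≠ ⊤ → hatGuessingNumber G < n) ∧ hatGuessingNumber G ≤ n := by
  have hlt := @hatGuessingNumber_lt_card _ _ G
  have hle := hatGuessingNumber_le_card G
  rw [Fintype.card_fin] at hlt hle
  exact ⟨hlt, hle⟩
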